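/- arXiv:0711.0947 — 5 statements merged into one kernel-verified Lean document; each statement's English description precedes it below -/
import Mathlib

section
/- Let F be a free left R-module and f an endomorphism of F lying in the Jacobson radical of End(F). Then the family {π_λ(Im f)}_{λ∈Λ} of left ideals of R (where π_λ are coordinate projections) is left vanishing: for any sequence a_1, a_2, ... with a_i ∈ π_{λ_i}(Im f) and pairwise distinct indices λ_i, there exists n with a_1 a_2 ⋯ a_n = 0. -/
/-- A submodule `N` of `M` is small (superfluous) in `M`. -/
def IsSmallSubmodule {R M : Type*} [Ring R] [AddCommGroup M] [Module R M]
    (N : Submodule R M) : Prop :=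
  ∀ K : Submodule R M, N ⊔ K = ⊤ → K = ⊤

/-- `L` is a weak supplement of `N` in `M`. -/
def IsWeakSupplement {R M : Type*} [Ring R] [AddCommGroup M] [Module R M]
    (L N : Submodule R M) : Prop :=
  N ⊔ L = ⊤ ∧ IsSmallSubmodule (N ⊓ L)

/-- A module is weakly supplemented if every submodule has a weak supplement. -/
def IsWeaklySupplemented (R M : Type*) [Ring R] [AddCommGroup M] [Module R M] : Prop :=
  ∀ N : Submodule R M, ∃ L : Submodule R M, IsWeakSupplement L N

/-- A left ideal is left t-nilpotent if every sequence in it has a vanishing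
initial left product `a 0 * a 1 * ⋯ * a (n-1) = 0`. -/
def IsLeftTNilpotent {R : Type*} [Ring R] (I : Ideal R) : Prop :=
  ∀ a : ℕ → R, (∀ i, a i ∈ I) → ∃ n : ℕ, ((List.range n).map a).prod = 0

/-- A ring is semilocal if it is semisimple modulo its Jacobson radical. -/
def IsSemilocalRing (R : Type*) [Ring R] : Prop :=
  IsSemisimpleModule R (R ⧸ (⊥ : Ideal R).jacobson)

/-- A ring is left perfect iff it is semilocal with left t-nilpotent Jacobson radical. -/
def IsLeftPerfectRing (R : Type*) [Ring R] : Prop :=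
  IsSemilocalRing R ∧ IsLeftTNilpotent (⊥ : Ideal R).jacobson

/-!
If `f` lies in the Jacobson radical of `End F`, then `Im f` is small in the projective module `F`,
and so is its image under any surjection; in particular each coordinate ideal `π_μ(Im f)` is small,
hence lies in `Jac R`.

Write `a i = v i (λ i)` with `v i ∈ Im f`. Choose `0 = n₀ < n₁ < ⋯` so fast that
`w k = (a_{n_k + 1} ⋯ a_{n_{k+1} - 1}) • v (n_{k+1}) ∈ Im f` has no coordinate at `λ (n j)` for
`j ≥ k + 2`; its coordinate at `λ (n_{k+1})` is `b k = a_{n_k + 1} ⋯ a_{n_{k+1}}`. Restricted to the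
coordinates `λ (n j)`, these give a small submodule of `R^(ℕ)` containing staircase vectors `u k`.
Together with it the vectors `e k - b k • e (k + 1)` span `R^(ℕ)` (solve triangularly, using that
`1 + u k k` is a unit), so by smallness they alone do. Bass's computation then expresses
`e 0 = ∑ c k • (e k - b k • e (k + 1))` with `c m = b 0 ⋯ b (m - 1) = a 1 ⋯ a_{n_m}`, which vanishes
once `m` leaves the support of `c`.
-/

theorem isUnit_one_add_of_mem_jacobson_bot {S : Type*} [Ring S] {x : S}
    (hx : x ∈ (⊥ : Ideal S).jacobson) : IsUnit (1 + x) := by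
  have hleft : ∀ t ∈ (⊥ : Ideal S).jacobson, ∃ z, z * (1 + t) = 1 := fun t ht => by
    obtain ⟨z, hz⟩ := Ideal.mem_jacobson_iff.mp ht 1
    rw [Submodule.mem_bot, sub_eq_zero, mul_one] at hz
    exact ⟨z, by rw [mul_add, mul_one, add_comm, hz]⟩
  obtain ⟨z, hz⟩ := hleft x hx
  -- `z = 1 - z * x` has a left inverse too, which can then only be `1 + x`
  obtain ⟨z', hz'⟩ := hleft (-(z * x)) (neg_mem (Ideal.mul_mem_left _ z hx))
  rw [show 1 + -(z * x) = z by rw [← sub_eq_zero, ← hz]; noncomm_ring] at hz'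
  have hz'_eq : z' = 1 + x := by
    calc z' = z' * (z * (1 + x)) := by rw [hz, mul_one]
      _ = 1 + x := by rw [← mul_assoc, hz', one_mul]
  exact isUnit_iff_exists.mpr ⟨z, hz'_eq ▸ hz', hz⟩

namespace IsSmallSubmodule

variable {R M M' : Type*} [Ring R] [AddCommGroup M] [Module R M] [AddCommGroup M'] [Module R M']

theorem map {N : Submodule R M} (hN : IsSmallSubmodule N) {φ : M →ₗ[R] M'}
    (hφ : Function.Surjective φ) : IsSmallSubmodule (N.map φ) := by
  intro K hK
  have hcomap : N ⊔ K.comap φ = ⊤ := by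
    refine eq_top_iff.mpr fun x _ => ?_
    obtain ⟨_, ⟨n, hn, rfl⟩, k, hk, hnk⟩ :=
      Submodule.mem_sup.mp (hK ▸ Submodule.mem_top : φ x ∈ N.map φ ⊔ K)
    refine Submodule.mem_sup.mpr ⟨n, hn, x - n, ?_, add_sub_cancel n x⟩
    rwa [Submodule.mem_comap, map_sub, ← hnk, add_sub_cancel_left]
  rw [← Submodule.map_comap_eq_of_surjective hφ K, hN _ hcomap, Submodule.map_top,
    LinearMap.range_eq_top.mpr hφ]

theorem le_jacobson_bot {I : Ideal R} (hI : IsSmallSubmodule I) :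
    I ≤ (⊥ : Ideal R).jacobson := by
  intro t ht
  refine Ideal.mem_sInf.mpr fun m ⟨_, hm⟩ => by_contra fun htm => hm.ne_top (hI m ?_)
  refine hm.1.2 _ (lt_of_le_of_ne le_sup_right fun h => htm ?_)
  rw [h]
  exact Submodule.mem_sup_left ht

theorem isUnit_one_add_apply {ι : Type*} {N : Submodule R (ι →₀ R)} (hN : IsSmallSubmodule N)
    {v : ι →₀ R} (hv : v ∈ N) (i : ι) : IsUnit (1 + v i) :=
  have hsurj : Function.Surjective (Finsupp.lapply (R := R) (M := R) i) := fun r =>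
    ⟨Finsupp.single i r, Finsupp.single_eq_same⟩
  isUnit_one_add_of_mem_jacobson_bot <| (hN.map hsurj).le_jacobson_bot ⟨v, hv, rfl⟩

end IsSmallSubmodule

theorem isSmallSubmodule_range_of_mem_jacobson {R M : Type*} [Ring R] [AddCommGroup M]
    [Module R M] [Module.Projective R M] {f : Module.End R M}
    (hf : f ∈ (⊥ : Ideal (Module.End R M)).jacobson) : IsSmallSubmodule (LinearMap.range f) := by
  intro K hK
  have hsurj : Function.Surjective (K.subtype.coprod f) := fun x => by
    obtain ⟨_, ⟨z, rfl⟩, k, hk, hzk⟩ := Submodule.mem_sup.mp (hK ▸ Submodule.mem_top : x ∈ _)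
    exact ⟨(⟨k, hk⟩, z), by simp [← hzk, add_comm]⟩
  obtain ⟨h, hh⟩ := Module.projective_lifting_property _ LinearMap.id hsurj
  set g := LinearMap.snd R K M ∘ₗ h
  have hunit : IsUnit (1 + f * -g) :=
    isUnit_one_add_of_mem_jacobson_bot (Ideal.mul_mem_right _ _ hf)
  have hrange : LinearMap.range (1 + f * -g) ≤ K := by
    rintro _ ⟨x, rfl⟩
    have hx := LinearMap.congr_fun hh x
    simp only [LinearMap.coe_comp, Function.comp_apply, LinearMap.coprod_apply,
      LinearMap.id_apply] at hx
    have : (1 + f * -g) x = (h x).1 := by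
      simp only [g, LinearMap.add_apply, Module.End.one_apply, Module.End.mul_apply,
        LinearMap.neg_apply, map_neg, LinearMap.coe_comp, Function.comp_apply, LinearMap.snd_apply,
        ← sub_eq_add_neg]
      exact (eq_sub_of_add_eq hx).symm
    rw [this]
    exact (h x).1.2
  rwa [LinearMap.range_eq_top.mpr ((Module.End.isUnit_iff _).mp hunit).2, top_le_iff] at hrange

section BlockProd

variable {M : Type*} [Monoid M] (a : ℕ → M)

/-- `a s * a (s + 1) * ⋯ * a (t - 1)`, which is `1` when `t ≤ s`. -/
def blockProd (s t : ℕ) : M := ((List.range' s (t - s)).map a).prod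

theorem blockProd_zero_left (t : ℕ) : blockProd a 0 t = ((List.range t).map a).prod := by
  simp [blockProd, List.range_eq_range']

theorem blockProd_self_succ (t : ℕ) : blockProd a t (t + 1) = a t := by
  simp [blockProd]

theorem blockProd_mul {s t r : ℕ} (hst : s ≤ t) (htr : t ≤ r) :
    blockProd a s t * blockProd a t r = blockProd a s r := by
  have h := List.range'_append (s := s) (m := t - s) (n := r - t) (step := 1)
  rw [show s + 1 * (t - s) = t by omega, show t - s + (r - t) = r - s by omega] at h
  rw [blockProd, blockProd, blockProd, ← List.prod_append, ← List.map_append, h]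

theorem prod_map_range_blockProd {n : ℕ → ℕ} (hn : Monotone n) (m : ℕ) :
    ((List.range m).map fun k => blockProd a (n k) (n (k + 1))).prod = blockProd a (n 0) (n m) := by
  induction m with
  | zero => simp [blockProd]
  | succ m ih => rw [List.prod_range_succ, ih, blockProd_mul a (hn m.zero_le) (hn m.le_succ)]

end BlockProd

theorem exists_strictMono_bound_lt (B : ℕ → ℕ → ℕ) :
    ∃ n : ℕ → ℕ, n 0 = 0 ∧ StrictMono n ∧ ∀ k, B (n k) (n (k + 1)) < n (k + 2) := by
  -- `P k = (n k, n (k + 1))`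
  let P : ℕ → ℕ × ℕ := fun k => Nat.rec (0, 1) (fun _ p => (p.2, max p.2 (B p.1 p.2) + 1)) k
  have hP : ∀ k, (P k).1 < (P k).2 := by
    intro k
    induction k with
    | zero => exact Nat.zero_lt_one
    | succ k _ => exact Nat.lt_succ_of_le (le_max_left _ _)
  refine ⟨fun k => (P k).1, rfl, strictMono_nat_of_lt_succ hP, fun k => ?_⟩
  exact Nat.lt_succ_of_le (le_max_right _ _)

open Finsupp in
theorem exists_prod_eq_zero_of_single_zero_mem_span {R : Type*} [Ring R] {b : ℕ → R}
    (h : single 0 1 ∈ Submodule.span R (Set.range fun k => single k 1 - single (k + 1) (b k))) :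
    ∃ n, ((List.range n).map b).prod = 0 := by
  set g : ℕ → ℕ →₀ R := fun k => single k 1 - single (k + 1) (b k)
  obtain ⟨c, hc⟩ := mem_span_range_iff_exists_finsupp.mp h
  change linearCombination R g c = single 0 1 at hc
  have hzero : ∀ c : ℕ →₀ R, linearCombination R g c 0 = c 0 := by
    intro c
    induction c using Finsupp.induction_linear with
    | zero => simp
    | add c₁ c₂ h₁ h₂ => simp [h₁, h₂]
    | single i r => simp [g, single_apply]
  have hsucc : ∀ (c : ℕ →₀ R) m, linearCombination R g c (m + 1) = c (m + 1) - c m * b m := by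
    intro c m
    induction c using Finsupp.induction_linear with
    | zero => simp
    | add c₁ c₂ h₁ h₂ => simp only [map_add, Finsupp.add_apply, h₁, h₂]; noncomm_ring
    | single i r => by_cases him : i = m <;> simp [g, single_apply, him]
  have hc_eq : ∀ m, c m = ((List.range m).map b).prod := by
    intro m
    induction m with
    | zero => simpa [hc] using (hzero c).symm
    | succ m ih =>
      have := hsucc c m
      rw [hc, single_eq_of_ne (by omega), eq_comm, sub_eq_zero] at this
      rw [this, ih, List.prod_range_succ]
  obtain ⟨m, hm⟩ := Infinite.exists_notMem_finset c.support
  exact ⟨m, by rw [← hc_eq, notMem_support_iff.mp hm]⟩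

open Finsupp in
theorem sup_span_single_sub_single_eq_top {R : Type*} [Ring R] {N : Submodule R (ℕ →₀ R)}
    {u : ℕ → ℕ →₀ R} (huN : ∀ k, u k ∈ N) (hu : ∀ k, (u k).support ⊆ Finset.range (k + 2))
    (hunit : ∀ k, IsUnit (1 + u k k)) :
    N ⊔ Submodule.span R (Set.range fun k => single k 1 - single (k + 1) (u k (k + 1))) = ⊤ := by
  set G := Submodule.span R (Set.range fun k => single k 1 - single (k + 1) (u k (k + 1)))
  have hsingle : ∀ k, single k (1 : R) ∈ N ⊔ G := by
    intro k
    induction k using Nat.strong_induction_on with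
    | _ k ih =>
    have hu_sum : u k = ∑ j ∈ Finset.range (k + 2), single j (u k j) := by
      conv_lhs => rw [← sum_single (u k)]
      exact sum_of_support_subset _ (hu k) _ (by simp)
    have hdecomp : u k + (single k 1 - single (k + 1) (u k (k + 1)))
        = (1 + u k k) • single k 1 + ∑ j ∈ Finset.range k, u k j • single j 1 := by
      nth_rewrite 1 [hu_sum]
      simp only [Finset.sum_range_succ, smul_single_one, single_add]
      abel
    have hmem : (1 + u k k) • single k (1 : R) ∈ N ⊔ G := by
      have h := add_mem (Submodule.mem_sup_left (huN k))
        (Submodule.mem_sup_right (Submodule.subset_span ⟨k, rfl⟩) : _ ∈ N ⊔ G)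
      rw [hdecomp] at h
      exact (Submodule.add_mem_iff_left _ (Submodule.sum_mem _ fun j hj =>
        Submodule.smul_mem _ _ (ih j (Finset.mem_range.mp hj)))).mp h
    obtain ⟨v, hv⟩ := hunit k
    simpa [← hv, smul_smul] using Submodule.smul_mem _ (↑v⁻¹ : R) hmem
  rw [eq_top_iff, ← Finsupp.basisSingleOne.span_eq, Submodule.span_le]
  rintro _ ⟨k, rfl⟩
  simpa using hsingle k

theorem IsSmallSubmodule.exists_prod_eq_zero_of_support_subset {R : Type*} [Ring R]
    {N : Submodule R (ℕ →₀ R)} (hN : IsSmallSubmodule N) {u : ℕ → ℕ →₀ R} (huN : ∀ k, u k ∈ N)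
    (hu : ∀ k, (u k).support ⊆ Finset.range (k + 2)) :
    ∃ n, ((List.range n).map fun k => u k (k + 1)).prod = 0 := by
  refine exists_prod_eq_zero_of_single_zero_mem_span ?_
  rw [hN _ (sup_span_single_sub_single_eq_top huN hu fun k => hN.isUnit_one_add_apply (huN k) k)]
  exact Submodule.mem_top

theorem IsSmallSubmodule.exists_prod_eq_zero {R Λ : Type*} [Ring R]
    {N : Submodule R (Λ →₀ R)} (hN : IsSmallSubmodule N) {lam : ℕ → Λ}
    (hlam : Function.Injective lam) {a : ℕ → R}
    (ha : ∀ i, a i ∈ N.map (Finsupp.lapply (lam i))) :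
    ∃ n, ((List.range n).map a).prod = 0 := by
  choose v hvN hva using ha
  let w : ℕ → ℕ → Λ →₀ R := fun s t => blockProd a (s + 1) t • v t
  obtain ⟨n, hn0, hmono, hbound⟩ := exists_strictMono_bound_lt fun s t =>
    ((w s t).support.preimage lam hlam.injOn).sup id
  have hinj : Function.Injective (lam ∘ n) := hlam.comp hmono.injective
  let ρ := Finsupp.lcomapDomain (M := R) (R := R) (lam ∘ n) hinj
  have hρ : Function.Surjective ρ := fun c =>
    ⟨Finsupp.mapDomain (lam ∘ n) c, Finsupp.comapDomain_mapDomain _ hinj c⟩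
  let u : ℕ → ℕ →₀ R := fun k => ρ (w (n k) (n (k + 1)))
  have hu_apply : ∀ k j, u k j = w (n k) (n (k + 1)) (lam (n j)) := fun _ _ => rfl
  have hsupp : ∀ k, (u k).support ⊆ Finset.range (k + 2) := by
    intro k j hj
    by_contra hjk
    have hj' : n j ∈ (w (n k) (n (k + 1))).support.preimage lam hlam.injOn := by
      simpa [Finset.mem_preimage, hu_apply] using hj
    have hle : n j ≤ _ := Finset.le_sup (f := id) hj'
    have hlt := hbound k
    have hnj := hmono.monotone (show k + 2 ≤ j by simpa using hjk)
    omega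
  have hblock : ∀ k, u k (k + 1) = blockProd a (n k + 1) (n (k + 1) + 1) := by
    intro k
    rw [hu_apply, Finsupp.smul_apply, smul_eq_mul, ← Finsupp.lapply_apply (R := R), hva,
      ← blockProd_self_succ a, blockProd_mul a (hmono (Nat.lt_succ_self k)) (Nat.le_succ _)]
  obtain ⟨m, hm⟩ := (hN.map hρ).exists_prod_eq_zero_of_support_subset
    (fun k => Submodule.mem_map_of_mem (N.smul_mem _ (hvN _))) hsupp
  rw [show (fun k => u k (k + 1)) = _ from funext hblock] at hm
  rw [prod_map_range_blockProd a (n := fun k => n k + 1) (fun i j hij => by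
    simpa using hmono.monotone hij) m, hn0] at hm
  refine ⟨n m + 1, ?_⟩
  rw [← blockProd_zero_left, ← blockProd_mul a (Nat.zero_le 1) (by omega), hm, mul_zero]

/-- Ware–Zelmanowitz: if `f` is an endomorphism of a free module `F = R^(Λ)` lying in the
Jacobson radical of `End(F)`, then the family `{π_λ(Im f)}` of left ideals is left vanishing. -/
theorem stmt4 {R : Type*} [Ring R] {Λ : Type*}
    (f : Module.End R (Λ →₀ R))
    (hf : f ∈ (⊥ : Ideal (Module.End R (Λ →₀ R))).jacobson)
    (lam : ℕ → Λ) (hlam : Function.Injective lam)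
    (a : ℕ → R)
    (ha : ∀ i, a i ∈ (LinearMap.range f).map (Finsupp.lapply (lam i))) :
    ∃ n : ℕ, ((List.range n).map a).prod = 0 :=
  (isSmallSubmodule_range_of_mem_jacobson hf).exists_prod_eq_zero hlam ha
end

section
/- Let M be a module, f ∈ End(M), and g ∈ End(M) such that f − fgf ∈ Jac(End(M)) and Im(f − fgf) is small in M. Then Im(f) + Im(1 − fg) = M and Im(f) ∩ Im(1 − fg) ⊆ Im(f − fgf); consequently Im(1 − fg) is a weak supplement of Im(f) in M. -/
/- If `x = f a = (1 - fg) b`, then `b = f (a + g b)`, whence `(f - fgf)(a + g b) = b - fg b = x`.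
So `Im f ∩ Im (1 - fg)` lies in the small submodule `Im (f - fgf)`. -/

theorem IsSmallSubmodule.mono {R M : Type*} [Ring R] [AddCommGroup M] [Module R M]
    {N N' : Submodule R M} (hN : N ≤ N') (hN' : IsSmallSubmodule N') :
    IsSmallSubmodule N :=
  fun K hK => hN' K (eq_top_iff.mpr (hK ▸ sup_le_sup_right hN K))

namespace Module.End

variable {R M : Type*} [Ring R] [AddCommGroup M] [Module R M] (f g : Module.End R M)

theorem range_sup_range_one_sub_mul_eq_top :
    LinearMap.range f ⊔ LinearMap.range (1 - f * g) = ⊤ := by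
  refine eq_top_iff.mpr fun m _ => ?_
  have hm : m = f (g m) + (1 - f * g) m := by simp
  exact hm ▸ Submodule.add_mem_sup ⟨g m, rfl⟩ ⟨m, rfl⟩

theorem range_inf_range_one_sub_mul_le_range :
    LinearMap.range f ⊓ LinearMap.range (1 - f * g) ≤ LinearMap.range (f - f * g * f) := by
  rintro x ⟨⟨a, rfl⟩, ⟨b, hb⟩⟩
  have hb_eq : b = f (a + g b) := by
    rw [map_add, ← hb]
    simp
  refine ⟨a + g b, ?_⟩
  calc (f - f * g * f) (a + g b) = f (a + g b) - f (g (f (a + g b))) := by simp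
    _ = f a := by rw [← hb_eq]; simpa using hb

end Module.End

theorem stmt9_general {R M : Type*} [Ring R] [AddCommGroup M] [Module R M]
    (f g : Module.End R M)
    (h₂ : IsSmallSubmodule (LinearMap.range (f - f * g * f))) :
    LinearMap.range f ⊔ LinearMap.range (1 - f * g) = ⊤ ∧
    LinearMap.range f ⊓ LinearMap.range (1 - f * g) ≤ LinearMap.range (f - f * g * f) ∧
    IsWeakSupplement (LinearMap.range (1 - f * g)) (LinearMap.range f) := by
  have hsup := Module.End.range_sup_range_one_sub_mul_eq_top f g
  have hinf := Module.End.range_inf_range_one_sub_mul_le_range f g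
  exact ⟨hsup, hinf, hsup, h₂.mono hinf⟩

/-- If `f - fgf ∈ Jac(End M)` and `Im(f - fgf)` is small in `M`, then
`Im f + Im(1 - fg) = M`, `Im f ∩ Im(1 - fg) ⊆ Im(f - fgf)`, and consequently
`Im(1 - fg)` is a weak supplement of `Im f` in `M`. -/
theorem stmt9 {R M : Type*} [Ring R] [AddCommGroup M] [Module R M]
    (f g : Module.End R M)
    (h₁ : f - f * g * f ∈ (⊥ : Ideal (Module.End R M)).jacobson)
    (h₂ : IsSmallSubmodule (LinearMap.range (f - f * g * f))) :
    LinearMap.range f ⊔ LinearMap.range (1 - f * g) = ⊤ ∧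
    LinearMap.range f ⊓ LinearMap.range (1 - f * g) ≤ LinearMap.range (f - f * g * f) ∧
    IsWeakSupplement (LinearMap.range (1 - f * g)) (LinearMap.range f) :=
  stmt9_general f g h₂
end

section
/- If R is a semilocal ring (R/Jac(R) semisimple), then every finitely generated left R-module is weakly supplemented. -/
/-!
Let `J` be the Jacobson radical of `R`. In a finitely generated module `M` every proper submodule
lies in a maximal one, and `J • M` lies in every maximal submodule, so `J • M` is small. Since `J`
annihilates `M ⧸ J • M`, that quotient is a sum of cyclic quotients of the semisimple module
`R ⧸ J`, hence semisimple. The preimage `L` of a complement of the image of `N` then satisfies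
`N ⊔ L ⊔ J • M = ⊤` and `N ⊓ L ≤ J • M`, and smallness of `J • M` finishes the proof.
-/

section

open Submodule

variable {R M : Type*} [Ring R] [AddCommGroup M] [Module R M]

theorem IsSmallSubmodule.mono_s11 {N P : Submodule R M} (hP : IsSmallSubmodule P) (hNP : N ≤ P) :
    IsSmallSubmodule N :=
  fun K hK ↦ hP K (top_unique (hK ▸ sup_le_sup_right hNP K))

theorem isSmallSubmodule_of_le_jacobson [IsCoatomic (Submodule R M)] {N : Submodule R M}
    (hN : N ≤ Module.jacobson R M) : IsSmallSubmodule N := by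
  intro K hK
  by_contra hK_ne
  obtain ⟨K', hK', hKK'⟩ := (eq_top_or_exists_le_coatom K).resolve_left hK_ne
  have hN' : N ≤ K' := hN.trans (sInf_le hK')
  exact hK'.1 (top_unique (hK ▸ sup_le hN' hKK'))

theorem isSemisimpleModule_of_isTorsionBySet {I : Ideal R} [IsSemisimpleModule R (R ⧸ I)]
    (hM : Module.IsTorsionBySet R M I) : IsSemisimpleModule R M := by
  refine isSemisimpleModule_of_isSemisimpleModule_submodule (s := Set.univ)
    (p := fun m : M ↦ span R {m}) (fun m _ ↦ ?_)
    (by rw [← span_eq_iSup_of_singleton_spans, span_univ])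
  have hI : I ≤ LinearMap.ker (LinearMap.toSpanSingleton R M m) := fun a ha ↦ @hM m ⟨a, ha⟩
  have := IsSemisimpleModule.range (I.liftQ _ hI)
  rwa [range_liftQ, ← LinearMap.span_singleton_eq_range] at this

theorem isWeaklySupplemented_of_isSmallSubmodule {P : Submodule R M} (hP : IsSmallSubmodule P)
    [IsSemisimpleModule R (M ⧸ P)] : IsWeaklySupplemented R M := by
  intro N
  obtain ⟨C, hC⟩ := exists_isCompl (N.map P.mkQ)
  refine ⟨C.comap P.mkQ, hP _ ?_, hP.mono_s11 ?_⟩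
  · rw [← map_mkQ_eq_top, Submodule.map_sup, map_comap_eq_of_surjective P.mkQ_surjective,
      hC.sup_eq_top]
  · refine (LinearMap.le_ker_iff_map.mpr ?_).trans_eq P.ker_mkQ
    rw [← le_bot_iff, ← hC.inf_eq_bot]
    exact (map_inf_le _).trans (inf_le_inf_left _ (map_comap_le _ _))

end

/-- Over a semilocal ring every finitely generated module is weakly supplemented. -/
theorem stmt11 {R : Type u} [Ring R] (hsl : IsSemilocalRing R)
    (M : Type v) [AddCommGroup M] [Module R M] [Module.Finite R M] :
    IsWeaklySupplemented R M := by
  rw [IsSemilocalRing, Ideal.jacobson_bot] at hsl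
  have := isSemisimpleModule_of_isTorsionBySet
    (Module.isTorsionBySet_quotient_ideal_smul M (Ring.jacobson R))
  exact isWeaklySupplemented_of_isSmallSubmodule
    (isSmallSubmodule_of_le_jacobson (Ring.jacobson_smul_top_le R M))
end

section
/- If the left R-module R is weakly supplemented, then R is a semilocal ring. -/
/-!
Let `J = Jac R`, and let `L` be a weak supplement of the preimage `N` of a submodule `P` of
`R ⧸ J`. Then `N ⊓ L` is small, hence lies in every maximal left ideal and so in `J`. Therefore
the image of `L` in `R ⧸ J` meets `P` trivially, and it spans `R ⧸ J` together with `P` because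
`N + L = R`: every submodule of `R ⧸ J` has a complement.
-/

section

variable {R M : Type*} [Ring R] [AddCommGroup M] [Module R M]

theorem IsSmallSubmodule.le_of_isCoatom {N K : Submodule R M} (hN : IsSmallSubmodule N)
    (hK : IsCoatom K) : N ≤ K := by
  by_contra hNK
  exact hK.1 (hN K (hK.2 _ (right_lt_sup.mpr hNK)))

theorem IsSmallSubmodule.le_jacobson {N : Ideal R} (hN : IsSmallSubmodule N) :
    N ≤ (⊥ : Ideal R).jacobson :=
  le_sInf fun _ hm => hN.le_of_isCoatom hm.2.1

theorem IsWeaklySupplemented.isSemisimpleModule_quotient (hws : IsWeaklySupplemented R M)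
    {K : Submodule R M} (hK : ∀ N : Submodule R M, IsSmallSubmodule N → N ≤ K) :
    IsSemisimpleModule R (M ⧸ K) := by
  refine (isSemisimpleModule_iff R _).mpr ⟨fun P => ?_⟩
  obtain ⟨L, hsup, hsmall⟩ := hws (P.comap K.mkQ)
  refine ⟨L.map K.mkQ, ?_, ?_⟩
  · rw [Submodule.disjoint_def]
    rintro _ hxP ⟨l, hl, rfl⟩
    exact (Submodule.Quotient.mk_eq_zero K).mpr (hK _ hsmall ⟨hxP, hl⟩)
  · rw [codisjoint_iff]
    simpa only [Submodule.map_sup, Submodule.map_top, Submodule.range_mkQ,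
      Submodule.map_comap_eq_of_surjective K.mkQ_surjective] using congrArg (·.map K.mkQ) hsup

end

/-- If `R` is weakly supplemented as a left module over itself, then `R` is semilocal. -/
theorem stmt12 {R : Type*} [Ring R] (hws : IsWeaklySupplemented R R) :
    IsSemilocalRing R :=
  hws.isSemisimpleModule_quotient fun _ hN => hN.le_jacobson
end

section
/- Let J be a left t-nilpotent two-sided ideal of a ring R. Then J·R^(ℕ) is a small submodule of R^(ℕ). -/
/-- A left t-nilpotent two-sided ideal `J` of `R` gives a small submodule
`J·R^(ℕ)` of `R^(ℕ)`. -/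
theorem stmt15 {R : Type*} [Ring R] (J : Ideal R)
    (hright : ∀ a ∈ J, ∀ r : R, a * r ∈ J)
    (ht : IsLeftTNilpotent J) :
    IsSmallSubmodule (J • (⊤ : Submodule R (ℕ →₀ R))) := by
  classical
  intro K hK
  -- coordinates of elements of `J • ⊤` lie in `J`
  have hcoord : ∀ y ∈ J • (⊤ : Submodule R (ℕ →₀ R)), ∀ m : ℕ, y m ∈ J := by
    intro y hy
    refine Submodule.smul_induction_on hy ?_ ?_
    · intro r hr x _ m
      rw [Finsupp.smul_apply, smul_eq_mul]
      exact hright r hr (x m)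
    · intro x y hx hy m
      rw [Finsupp.add_apply]
      exact J.add_mem (hx m) (hy m)
  -- write each basis vector as `f n + z n` with `f n ∈ J•⊤`, `z n ∈ K`
  have hmem : ∀ n : ℕ, ∃ y ∈ J • (⊤ : Submodule R (ℕ →₀ R)), ∃ zz ∈ K,
      y + zz = Finsupp.single n 1 := by
    intro n
    have : (Finsupp.single n 1 : ℕ →₀ R) ∈ J • (⊤ : Submodule R (ℕ →₀ R)) ⊔ K := by
      rw [hK]; trivial
    exact Submodule.mem_sup.mp this
  choose f hfJ z hzK hfz using hmem
  have hsubK : ∀ n : ℕ, (Finsupp.single n 1 : ℕ →₀ R) - f n ∈ K := by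
    intro n
    have := hfz n
    have : (Finsupp.single n 1 : ℕ →₀ R) - f n = z n := by
      rw [← this]; abel
    rw [this]; exact hzK n
  -- the substitution operator and its iterates
  set T : (ℕ →₀ R) →ₗ[R] (ℕ →₀ R) := Finsupp.linearCombination R f with hT
  set g : ℕ → ℕ → (ℕ →₀ R) := fun m t => (T ^ t) (Finsupp.single m 1) with hg
  have hg0 : ∀ m, g m 0 = Finsupp.single m 1 := by
    intro m; simp [hg]
  have hgsucc : ∀ m t, g m (t + 1) = (T ^ t) (f m) := by
    intro m t
    have : (T ^ (t + 1)) = (T ^ t) * T := pow_succ T t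
    simp only [hg, this, Module.End.mul_apply]
    congr 1
    simp [hT, Finsupp.linearCombination_single]
  -- `single n 1 - g n t ∈ K` for all `t`
  have hK_sub : ∀ n t, (Finsupp.single n 1 : ℕ →₀ R) - g n t ∈ K := by
    intro n t
    induction t with
    | zero => rw [hg0]; simp
    | succ t ih =>
        have hstep : g n t - g n (t + 1) ∈ K := by
          have h1 : g n (t + 1) = T (g n t) := by
            have : (T ^ (t + 1)) = T * (T ^ t) := pow_succ' T t
            simp [hg, this, Module.End.mul_apply]
          have h2 : T (g n t) = (g n t).sum fun m r => r • f m := by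
            simp [hT, Finsupp.linearCombination_apply]
          have h3 : g n t = (g n t).sum fun m r => r • Finsupp.single m 1 := by
            conv_lhs => rw [← Finsupp.sum_single (g n t)]
            refine Finsupp.sum_congr fun m _ => ?_
            rw [Finsupp.smul_single, smul_eq_mul, mul_one]
          rw [h1, h2]
          nth_rewrite 1 [h3]
          rw [Finsupp.sum, Finsupp.sum, ← Finset.sum_sub_distrib]
          refine Submodule.sum_mem K fun m _ => ?_
          rw [← smul_sub]
          exact K.smul_mem _ (hsubK m)
        have := K.add_mem ih hstep
        have heq : Finsupp.single n 1 - g n t + (g n t - g n (t + 1))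
            = Finsupp.single n 1 - g n (t + 1) := by abel
        rwa [heq] at this
  -- the key expansion formula
  have hexp : ∀ (m : ℕ) (t : ℕ) (p : R),
      p • g m (t + 1) = ∑ m' ∈ (f m).support, (p * (f m) m') • g m' t := by
    intro m t p
    rw [hgsucc]
    have h1 : f m = (f m).sum fun m' r => r • Finsupp.single m' 1 := by
      conv_lhs => rw [← Finsupp.sum_single (f m)]
      refine Finsupp.sum_congr fun m' _ => ?_
      rw [Finsupp.smul_single, smul_eq_mul, mul_one]
    conv_lhs => rw [h1]
    rw [Finsupp.sum, map_sum, Finset.smul_sum]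
    refine Finset.sum_congr rfl fun m' _ => ?_
    rw [map_smul, smul_smul]
  -- zero propagation
  have hprop : ∀ (m : ℕ) (p : R) (s t : ℕ), s ≤ t → p • g m s = 0 → p • g m t = 0 := by
    intro m p s t hst h0
    have : g m t = (T ^ (t - s)) (g m s) := by
      have : T ^ t = (T ^ (t - s)) * (T ^ s) := by
        rw [← pow_add, Nat.sub_add_cancel hst]
      simp [hg, this, Module.End.mul_apply]
    rw [this, ← map_smul, h0, map_zero]
  -- the key selection step
  have key : ∀ (m : ℕ) (p : R), ∃ m' : ℕ,
      ((∀ t, p • g m t ≠ 0) → ∀ t, (p * (f m) m') • g m' t ≠ 0) := by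
    intro m p
    by_cases H : ∀ t, p • g m t ≠ 0
    · by_contra hcon
      push_neg at hcon
      have hall : ∀ m' : ℕ, ∃ t, (p * (f m) m') • g m' t = 0 := fun m' => (hcon m').2
      choose t0 ht0 using hall
      set N := (f m).support.sup t0 with hN
      have : p • g m (N + 1) = 0 := by
        rw [hexp]
        refine Finset.sum_eq_zero fun m' hm' => ?_
        exact hprop m' _ (t0 m') N (Finset.le_sup hm') (ht0 m')
      exact H (N + 1) this
    · exact ⟨0, fun h => absurd h H⟩
  choose nxt hnxt using key
  -- every `g n ·` eventually vanishes
  have hvanish : ∀ n : ℕ, ∃ t, g n t = 0 := by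
    intro n
    by_contra hcon
    push_neg at hcon
    -- build the bad sequence
    set s : ℕ → ℕ × R := fun i =>
      Nat.rec (n, (1 : R))
        (fun _ mp => (nxt mp.1 mp.2, mp.2 * (f mp.1) (nxt mp.1 mp.2))) i with hs
    have hgood : ∀ i, ∀ t, (s i).2 • g (s i).1 t ≠ 0 := by
      intro i
      induction i with
      | zero =>
          intro t
          show (1 : R) • g n t ≠ 0
          rw [one_smul]
          exact hcon t
      | succ i ih =>
          have : s (i + 1) = (nxt (s i).1 (s i).2,
              (s i).2 * (f (s i).1) (nxt (s i).1 (s i).2)) := rfl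
          rw [this]
          exact hnxt (s i).1 (s i).2 ih
    set b : ℕ → R := fun i => (f (s i).1) ((s (i + 1)).1) with hb
    have hbJ : ∀ i, b i ∈ J := fun i => hcoord (f (s i).1) (hfJ (s i).1) _
    have hprod : ∀ i, ((List.range i).map b).prod = (s i).2 := by
      intro i
      induction i with
      | zero => rfl
      | succ i ih =>
          rw [List.range_succ, List.map_append, List.prod_append, ih,
            List.map_cons, List.map_nil, List.prod_cons, List.prod_nil, mul_one]
    obtain ⟨i, hi⟩ := ht b hbJ
    rw [hprod] at hi
    exact hgood i 0 (by rw [hi, zero_smul])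
  -- conclude: every basis vector lies in `K`
  have hbasis : ∀ n : ℕ, (Finsupp.single n 1 : ℕ →₀ R) ∈ K := by
    intro n
    obtain ⟨t, ht'⟩ := hvanish n
    have := hK_sub n t
    rwa [ht', sub_zero] at this
  -- hence `K = ⊤`
  rw [eq_top_iff]
  intro x _
  have hx : x = x.sum fun m r => Finsupp.single m r := (Finsupp.sum_single x).symm
  rw [hx, Finsupp.sum]
  refine Submodule.sum_mem K fun m _ => ?_
  have : Finsupp.single m (x m) = (x m) • Finsupp.single m 1 := by
    rw [Finsupp.smul_single, smul_eq_mul, mul_one]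
  rw [this]
  exact K.smul_mem _ (hbasis m)
end
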